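/- arXiv:1605.05753 — 2 statements merged into one kernel-verified Lean document; each statement's English description precedes it below -/
import Mathlib

section
/- If W_1,...,W_N are independent nonnegative random variables with CDFs bounded below by F_1,...,F_N respectively (i.e. P(W_n ≤ x) ≥ F_n(x) for all x, with each F_n a CDF), then P(∑_{n=1}^N W_n > τ) ≤ 1 − (F_1 ∗ ⋯ ∗ F_N)(τ), where ∗ is the convolution of distribution functions. -/
/-!
By independence, the law of `(W₁, …, W_N)` is the product of the marginal laws, so
`P(∑ Wₙ ≤ τ)` is the product measure of the half-space `{x | ∑ xₙ ≤ τ}`. Its sections along any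
coordinate are half-lines `Iic t`, so by Fubini the product measure of this set can only grow
when one factor is replaced by a measure with pointwise larger CDF. Swapping the factors `νₙ`
for the laws of the `Wₙ` one at a time gives `(F₁ ∗ ⋯ ∗ F_N)(τ) ≤ P(∑ Wₙ ≤ τ)`.
-/

open MeasureTheory ProbabilityTheory Finset

namespace MeasureTheory.Measure

variable {X Y : Type*} [MeasurableSpace X] [MeasurableSpace Y] {f : X → ℝ} {g : Y → ℝ}

lemma prod_setOf_add_le_mono_left (hf : Measurable f) (hg : Measurable g)
    {α α' : Measure X} (β : Measure Y) [SFinite α] [SFinite α'] [SFinite β]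
    (h : ∀ t, α {x | f x ≤ t} ≤ α' {x | f x ≤ t}) (τ : ℝ) :
    α.prod β {p | f p.1 + g p.2 ≤ τ} ≤ α'.prod β {p | f p.1 + g p.2 ≤ τ} := by
  have hB : MeasurableSet {p : X × Y | f p.1 + g p.2 ≤ τ} :=
    measurableSet_le (by fun_prop) measurable_const
  rw [prod_apply_symm hB, prod_apply_symm hB]
  refine lintegral_mono fun y ↦ ?_
  simpa only [Set.preimage_ofPred_eq, ← le_sub_iff_add_le] using h (τ - g y)

lemma prod_setOf_add_le_mono_right (hf : Measurable f) (hg : Measurable g)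
    (α : Measure X) {β β' : Measure Y} [SFinite β] [SFinite β']
    (h : ∀ t, β {y | g y ≤ t} ≤ β' {y | g y ≤ t}) (τ : ℝ) :
    α.prod β {p | f p.1 + g p.2 ≤ τ} ≤ α.prod β' {p | f p.1 + g p.2 ≤ τ} := by
  have hB : MeasurableSet {p : X × Y | f p.1 + g p.2 ≤ τ} :=
    measurableSet_le (by fun_prop) measurable_const
  rw [prod_apply hB, prod_apply hB]
  refine lintegral_mono fun x ↦ ?_
  simpa only [Set.preimage_ofPred_eq, ← le_sub_iff_add_le'] using h (τ - f x)

lemma pi_setOf_sum_le_eq_prod {N : ℕ} (ν : Fin (N + 1) → Measure ℝ) [∀ n, SigmaFinite (ν n)]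
    (τ : ℝ) :
    Measure.pi ν {x | ∑ n, x n ≤ τ} =
      (ν 0).prod (Measure.pi fun n : Fin N ↦ ν n.succ) {p | p.1 + ∑ n, p.2 n ≤ τ} := by
  have e := measurePreserving_piFinSuccAbove ν 0
  simp only [Fin.succAbove_zero] at e
  rw [← e.measure_preimage_equiv]
  congr 1 with x
  simp [Fin.sum_univ_succ, Fin.tail]

theorem pi_setOf_sum_le_mono {N : ℕ} {ν κ : Fin N → Measure ℝ}
    [∀ n, SigmaFinite (ν n)] [∀ n, SigmaFinite (κ n)]
    (h : ∀ n x, ν n (Set.Iic x) ≤ κ n (Set.Iic x)) (τ : ℝ) :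
    Measure.pi ν {x | ∑ n, x n ≤ τ} ≤ Measure.pi κ {x | ∑ n, x n ≤ τ} := by
  induction N generalizing τ with
  | zero => rw [pi_of_empty ν, pi_of_empty κ]
  | succ N ih =>
    calc Measure.pi ν {x | ∑ n, x n ≤ τ}
        = (ν 0).prod (Measure.pi fun n : Fin N ↦ ν n.succ) {p | id p.1 + ∑ n, p.2 n ≤ τ} :=
          pi_setOf_sum_le_eq_prod ν τ
      _ ≤ (κ 0).prod (Measure.pi fun n : Fin N ↦ ν n.succ) {p | id p.1 + ∑ n, p.2 n ≤ τ} :=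
          prod_setOf_add_le_mono_left measurable_id (by fun_prop) _ (h 0) τ
      _ ≤ (κ 0).prod (Measure.pi fun n : Fin N ↦ κ n.succ) {p | id p.1 + ∑ n, p.2 n ≤ τ} :=
          prod_setOf_add_le_mono_right measurable_id (by fun_prop) _
            (ih (fun n ↦ h n.succ)) τ
      _ = Measure.pi κ {x | ∑ n, x n ≤ τ} := (pi_setOf_sum_le_eq_prod κ τ).symm

end MeasureTheory.Measure

theorem tail_bound_sum_independent_convolution_general
    {Ω : Type*} {m : MeasurableSpace Ω} (μ : Measure Ω) [IsProbabilityMeasure μ]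
    (N : ℕ) (W : Fin N → Ω → ℝ) (hW : ∀ n, Measurable (W n))
    (hindep : iIndepFun W μ)
    (ν : Fin N → Measure ℝ) (hν : ∀ n, IsProbabilityMeasure (ν n))
    (hcdf : ∀ n x, ((ν n) (Set.Iic x)).toReal ≤ (μ {ω | W n ω ≤ x}).toReal)
    (τ : ℝ) :
    (μ {ω | τ < ∑ n, W n ω}).toReal
      ≤ 1 - ((Measure.pi ν) {x | ∑ n, x n ≤ τ}).toReal := by
  have hS : MeasurableSet {x : Fin N → ℝ | ∑ n, x n ≤ τ} :=
    measurableSet_le (by fun_prop) measurable_const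
  have hlaw : μ {ω | ∑ n, W n ω ≤ τ} = Measure.pi (fun n ↦ μ.map (W n)) {x | ∑ n, x n ≤ τ} := by
    rw [← hindep.map_fun_eq_pi_map fun n ↦ (hW n).aemeasurable,
      Measure.map_apply (by fun_prop) hS]
    rfl
  have hdom : Measure.pi ν {x | ∑ n, x n ≤ τ} ≤ μ {ω | ∑ n, W n ω ≤ τ} := by
    rw [hlaw]
    refine Measure.pi_setOf_sum_le_mono (fun n x ↦ ?_) τ
    rw [Measure.map_apply (hW n) measurableSet_Iic]
    exact (ENNReal.toReal_le_toReal (measure_ne_top _ _) (measure_ne_top _ _)).mp (hcdf n x)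
  have htail : μ {ω | τ < ∑ n, W n ω} = 1 - μ {ω | ∑ n, W n ω ≤ τ} := by
    rw [← prob_compl_eq_one_sub (measurableSet_le (by fun_prop) measurable_const)]
    simp only [Set.compl_ofPred, not_le]
  rw [htail, ENNReal.toReal_sub_of_le prob_le_one ENNReal.one_ne_top, ENNReal.toReal_one]
  gcongr
  exact measure_ne_top _ _

/-- Tail bound for a sum of independent nonnegative random variables whose CDFs are
bounded below by the CDFs F_n of probability measures ν_n:
P(∑ W_n > τ) ≤ 1 − (F_1 ∗ ⋯ ∗ F_N)(τ), the convolution being evaluated as the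
product measure of the set {x | ∑ x_n ≤ τ}. -/
theorem tail_bound_sum_independent_convolution
    {Ω : Type*} {m : MeasurableSpace Ω} (μ : Measure Ω) [IsProbabilityMeasure μ]
    (N : ℕ) (W : Fin N → Ω → ℝ) (hW : ∀ n, Measurable (W n))
    (hWpos : ∀ n ω, 0 ≤ W n ω)
    (hindep : iIndepFun W μ)
    (ν : Fin N → Measure ℝ) (hν : ∀ n, IsProbabilityMeasure (ν n))
    (hcdf : ∀ n x, ((ν n) (Set.Iic x)).toReal ≤ (μ {ω | W n ω ≤ x}).toReal)
    (τ : ℝ) :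
    (μ {ω | τ < ∑ n, W n ω}).toReal
      ≤ 1 - ((Measure.pi ν) {x | ∑ n, x n ≤ τ}).toReal :=
  tail_bound_sum_independent_convolution_general (m := m) μ N W hW hindep ν hν hcdf τ
end

section
/- With d^j given by the FIFO recursion d^j = max(a^j, d^{j−1}) + ℓ^j/C^j, the delay D^j = d^j − a^j satisfies D^j ≤ sup_{0 ≤ s ≤ a^j} [ ∑_n A_n(s, a^j+)/C_n − (a^j − s) ] + ∑_n A_n(a^j, a^j+)/C_n, where A_n(s,t) is the cumulative class-n traffic in [s,t) and class-n customers are served at rate C_n. (Discrete-time version: the delay is bounded by the virtual waiting time at the arrival instant plus the total normalized service time of concurrent arrivals.) -/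
open Finset

/-! If customer `m` opens the busy period containing customer `j`, the FIFO recursion gives
`d j = a m + ∑_{m ≤ i ≤ j} ℓ^i / C^i`. All these customers arrive in `[a m, a j]`, so the
sum is at most the normalized traffic of `[a m, a j)` plus that arriving at `a j`; the first
part, minus `a j - a m`, is the term `s = a m` of the supremum. -/

theorem sum_classwise_div {ι κ : Type*} [Fintype ι] [DecidableEq ι] (S : Finset κ)
    (cls : κ → ι) (p : κ → Prop) [DecidablePred p] (l : κ → ℝ) (C : ι → ℝ) :
    ∑ n, (∑ k ∈ S, if cls k = n ∧ p k then l k else 0) / C n =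
      ∑ k ∈ S, if p k then l k / C (cls k) else 0 := by
  simp only [sum_div]
  rw [sum_comm]
  refine sum_congr rfl fun k _ => ?_
  by_cases hp : p k <;> simp [hp, ite_div]

theorem exists_busy_period_start {a d w : ℕ → ℝ} (h0 : d 0 ≤ a 1)
    (hrec : ∀ k, 1 ≤ k → d k = max (a k) (d (k - 1)) + w k) {j : ℕ} (hj : 1 ≤ j) :
    ∃ m ∈ Icc 1 j, d j = a m + ∑ i ∈ Icc m j, w i := by
  induction j, hj using Nat.le_induction with
  | base => exact ⟨1, by simp, by simp [hrec 1 le_rfl, max_eq_left h0]⟩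
  | succ j hj ih =>
    rw [hrec (j + 1) (by omega), Nat.add_sub_cancel]
    by_cases hidle : d j ≤ a (j + 1)
    · exact ⟨j + 1, by simp, by simp [max_eq_left hidle]⟩
    · obtain ⟨m, hm, hdj⟩ := ih
      have hmj : m ≤ j + 1 := by grind
      refine ⟨m, by grind, ?_⟩
      rw [max_eq_right (le_of_not_ge hidle), hdj, sum_Icc_succ_top hmj]
      ring

theorem sum_Icc_le_sum_ite_of_monotone {α : Type*} [Preorder α] [DecidableLE α] {a : ℕ → α}
    (ha : Monotone a) {w : ℕ → ℝ} (hw : ∀ k, 0 ≤ w k) {S : Finset ℕ} {m j : ℕ}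
    (hS : Icc m j ⊆ S) :
    ∑ i ∈ Icc m j, w i ≤ ∑ k ∈ S, if a m ≤ a k ∧ a k ≤ a j then w k else 0 := by
  calc ∑ i ∈ Icc m j, w i
      = ∑ k ∈ Icc m j, if a m ≤ a k ∧ a k ≤ a j then w k else 0 :=
        sum_congr rfl fun k hk => (if_pos ⟨ha (mem_Icc.mp hk).1, ha (mem_Icc.mp hk).2⟩).symm
    _ ≤ _ := sum_le_sum_of_subset_of_nonneg hS fun k _ _ => by split_ifs <;> simp [hw]

theorem ite_Icc_eq_ite_Ico_add_ite_eq {s t x : ℕ} (hst : s ≤ t) (c : ℝ) :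
    (if s ≤ x ∧ x ≤ t then c else 0) =
      (if s ≤ x ∧ x < t then c else 0) + (if t ≤ x ∧ x < t + 1 then c else 0) := by
  split_ifs <;> first | (exfalso; omega) | simp

/-- Discrete-time multiclass FIFO: with the departure recursion
d^j = max(a^j, d^{j−1}) + ℓ^j/C_{cls j}, the delay of customer j is bounded by the
virtual waiting time at its (integer) arrival instant a^j plus the total normalized
service time of the arrivals at time a^j:
D^j ≤ max_{0 ≤ s ≤ a^j} [∑_n A_n(s, a^j)/C_n − (a^j − s)] + ∑_n A_n(a^j, a^j+1)/C_n,
where A_n(s,t) is the cumulative class-n traffic arriving in [s,t). -/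
theorem multiclass_fifo_delay_le_virtual_waiting
    (N : ℕ) (C : Fin N → ℝ) (hC : ∀ n, 0 < C n)
    (J : ℕ) (a : ℕ → ℕ) (cls : ℕ → Fin N) (l : ℕ → ℝ) (d : ℕ → ℝ)
    (hl : ∀ k, 0 < l k) (hamono : ∀ k k', k ≤ k' → a k ≤ a k')
    (hd0 : d 0 = 0)
    (hrec : ∀ k, 1 ≤ k → d k = max (a k : ℝ) (d (k - 1)) + l k / C (cls k))
    (A : Fin N → ℕ → ℕ → ℝ)
    (hA : ∀ n s t, A n s t =
      ∑ k ∈ Finset.Icc 1 J, if cls k = n ∧ s ≤ a k ∧ a k < t then l k else 0) :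
    ∀ j ∈ Finset.Icc 1 J,
      d j - (a j : ℝ) ≤
        (Finset.range (a j + 1)).sup' (Finset.nonempty_range_iff.mpr (Nat.succ_ne_zero _))
          (fun s => ∑ n, A n s (a j) / C n - ((a j : ℝ) - (s : ℝ)))
        + ∑ n, A n (a j) (a j + 1) / C n := by
  intro j hj
  obtain ⟨hj1, hjJ⟩ := mem_Icc.mp hj
  set w : ℕ → ℝ := fun k => l k / C (cls k)
  obtain ⟨m, hm, hdj⟩ :=
    exists_busy_period_start (a := fun k => (a k : ℝ)) (w := w) (by simp [hd0]) hrec hj1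
  obtain ⟨hm1, hmj⟩ := mem_Icc.mp hm
  have hamj : a m ≤ a j := hamono m j hmj
  have hW : ∀ s t, ∑ n, A n s t / C n =
      ∑ k ∈ Icc 1 J, if s ≤ a k ∧ a k < t then w k else 0 := fun s t => by
    simp only [hA]
    exact sum_classwise_div _ cls _ l C
  have hwork : ∑ i ∈ Icc m j, w i ≤
      ∑ n, A n (a m) (a j) / C n + ∑ n, A n (a j) (a j + 1) / C n := by
    rw [hW, hW, ← sum_add_distrib]
    calc ∑ i ∈ Icc m j, w i
        ≤ ∑ k ∈ Icc 1 J, if a m ≤ a k ∧ a k ≤ a j then w k else 0 :=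
          sum_Icc_le_sum_ite_of_monotone (fun _ _ h => hamono _ _ h)
            (fun k => (div_pos (hl k) (hC (cls k))).le) (Icc_subset_Icc hm1 hjJ)
      _ = _ := sum_congr rfl fun k _ => ite_Icc_eq_ite_Ico_add_ite_eq hamj (w k)
  have hsup := le_sup' (fun s : ℕ => ∑ n, A n s (a j) / C n - ((a j : ℝ) - (s : ℝ)))
    (mem_range.mpr (Nat.lt_succ_of_le hamj))
  rw [hdj]
  linarith
end
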